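/- arXiv:2009.06936 — 6 statements merged into one kernel-verified Lean document; each statement's English description precedes it below -/
import Mathlib

section
/- Let φ : ℂ → ℂ be real-differentiable at a point z with Wirtinger derivatives φ_z ≠ 0 and Jacobian J(z,φ) = |φ_z|² − |φ_z̄|² > 0. Set μ := φ_z̄/φ_z (so |μ| < 1) and let A be the matrix with entries a₁₁ = |1−μ|²/(1−|μ|²), a₁₂ = a₂₁ = −2·Im μ/(1−|μ|²), a₂₂ = |1+μ|²/(1−|μ|²). Then for every real-valued function f that is real-differentiable at w = φ(z), the composition u = f ∘ φ satisfies the pointwise identity ⟨A ∇u(z), ∇u(z)⟩ = |∇f(φ(z))|² · J(z,φ). -/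
/-- Wirtinger derivative `φ_z = ½(Dφ(z)(1) − i·Dφ(z)(i))`. -/
noncomputable def wirtingerZ (φ : ℂ → ℂ) (z : ℂ) : ℂ :=
  (fderiv ℝ φ z 1 - Complex.I * fderiv ℝ φ z Complex.I) / 2

/-- Wirtinger derivative `φ_z̄ = ½(Dφ(z)(1) + i·Dφ(z)(i))`. -/
noncomputable def wirtingerZbar (φ : ℂ → ℂ) (z : ℂ) : ℂ :=
  (fderiv ℝ φ z 1 + Complex.I * fderiv ℝ φ z Complex.I) / 2

/-- Jacobian `J(z,φ) = |φ_z|² − |φ_z̄|²`. -/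
noncomputable def jacobian (φ : ℂ → ℂ) (z : ℂ) : ℝ :=
  ‖wirtingerZ φ z‖ ^ 2 - ‖wirtingerZbar φ z‖ ^ 2

/-- The matrix `A(μ)` induced by a Beltrami coefficient `μ`. -/
noncomputable def matrixOfMu (μ : ℂ) : Matrix (Fin 2) (Fin 2) ℝ :=
  !![‖1 - μ‖ ^ 2 / (1 - ‖μ‖ ^ 2),
       -2 * μ.im / (1 - ‖μ‖ ^ 2);
     -2 * μ.im / (1 - ‖μ‖ ^ 2),
       ‖1 + μ‖ ^ 2 / (1 - ‖μ‖ ^ 2)]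

/-- The quadratic form `⟨A v, v⟩` on `ℝ²`. -/
noncomputable def quadForm (A : Matrix (Fin 2) (Fin 2) ℝ) (v : Fin 2 → ℝ) : ℝ :=
  dotProduct (A.mulVec v) v

/-- The gradient of `f : ℂ → ℝ` at `z` as a vector in `ℝ²`. -/
noncomputable def gradVec (f : ℂ → ℝ) (z : ℂ) : Fin 2 → ℝ :=
  ![fderiv ℝ f z 1, fderiv ℝ f z Complex.I]

/-- Pointwise identity underlying the isometry property of `A`-quasiconformal
composition operators: `⟨A ∇(f∘φ)(z), ∇(f∘φ)(z)⟩ = |∇f(φ(z))|² · J(z,φ)` where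
`A = A(μ)` with `μ = φ_z̄/φ_z`. -/
theorem quadForm_comp_eq (φ : ℂ → ℂ) (z : ℂ) (hφ : DifferentiableAt ℝ φ z)
    (hz : wirtingerZ φ z ≠ 0) (hJ : 0 < jacobian φ z)
    (f : ℂ → ℝ) (hf : DifferentiableAt ℝ f (φ z)) :
    quadForm (matrixOfMu (wirtingerZbar φ z / wirtingerZ φ z)) (gradVec (f ∘ φ) z) =
      ((fderiv ℝ f (φ z) 1) ^ 2 + (fderiv ℝ f (φ z) Complex.I) ^ 2) * jacobian φ z := by
  set p := wirtingerZ φ z with hp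
  set q := wirtingerZbar φ z with hq
  set a := fderiv ℝ f (φ z) 1 with ha
  set b := fderiv ℝ f (φ z) Complex.I with hb
  have hcomp : fderiv ℝ (f ∘ φ) z = (fderiv ℝ f (φ z)).comp (fderiv ℝ φ z) :=
    fderiv_comp z hf hφ
  have hL : ∀ w : ℂ, fderiv ℝ f (φ z) w = w.re * a + w.im * b := by
    intro w
    have h1 : w = w.re • (1:ℂ) + w.im • Complex.I := by
      simp [Complex.real_smul, Complex.re_add_im]
    conv_lhs => rw [h1]
    rw [map_add, map_smul, map_smul, smul_eq_mul, smul_eq_mul]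
  have hDφ1 : fderiv ℝ φ z 1 = p + q := by
    rw [hp, hq]; unfold wirtingerZ wirtingerZbar; ring
  have hDφi : fderiv ℝ φ z Complex.I = Complex.I * (p - q) := by
    rw [hp, hq]; unfold wirtingerZ wirtingerZbar
    linear_combination (fderiv ℝ φ z Complex.I) * Complex.I_mul_I
  have hnp : Complex.normSq p ≠ 0 := by
    simpa [Complex.normSq_eq_zero] using hz
  have hJ' : jacobian φ z = Complex.normSq p - Complex.normSq q := by
    unfold jacobian
    rw [← hp, ← hq, Complex.sq_norm, Complex.sq_norm]
  have hJne : Complex.normSq p - Complex.normSq q ≠ 0 := by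
    rw [hJ'] at hJ; linarith
  have hden : 1 - ‖q / p‖ ^ 2 =
      (Complex.normSq p - Complex.normSq q) / Complex.normSq p := by
    rw [Complex.sq_norm, Complex.normSq_div]
    field_simp
  have h1m : ‖1 - q / p‖ ^ 2 = Complex.normSq (p - q) / Complex.normSq p := by
    rw [Complex.sq_norm]
    have : (1 : ℂ) - q / p = (p - q) / p := by field_simp
    rw [this, Complex.normSq_div]
  have h1p : ‖1 + q / p‖ ^ 2 = Complex.normSq (p + q) / Complex.normSq p := by
    rw [Complex.sq_norm]
    have : (1 : ℂ) + q / p = (p + q) / p := by field_simp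
    rw [this, Complex.normSq_div]
  have hμim : (q / p).im = (q.im * p.re - q.re * p.im) / Complex.normSq p := by
    rw [Complex.div_im]; ring
  have hu1 : fderiv ℝ (f ∘ φ) z 1 = (p.re + q.re) * a + (p.im + q.im) * b := by
    rw [hcomp]; simp only [ContinuousLinearMap.comp_apply, hDφ1, hL]
    simp [Complex.add_re, Complex.add_im]
  have hu2 : fderiv ℝ (f ∘ φ) z Complex.I = -(p.im - q.im) * a + (p.re - q.re) * b := by
    rw [hcomp]; simp only [ContinuousLinearMap.comp_apply, hDφi, hL]
    simp [Complex.mul_re, Complex.mul_im, Complex.sub_re, Complex.sub_im]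
    try ring
  unfold quadForm matrixOfMu gradVec
  simp only [Matrix.mulVec, dotProduct, Fin.sum_univ_two, Matrix.of_apply, Matrix.cons_val',
    Matrix.cons_val_zero, Matrix.cons_val_one, Matrix.head_cons, Matrix.empty_val',
    Matrix.cons_val_fin_one, Matrix.head_fin_const]
  rw [hu1, hu2, hJ', hden, h1m, h1p, hμim]
  field_simp
  simp only [Complex.normSq_apply, Complex.sub_re, Complex.sub_im, Complex.add_re,
    Complex.add_im]
  ring
end

section
/- Let Ω, Ω̃ ⊂ ℂ be open sets and φ : Ω → Ω̃ a C¹-diffeomorphism with J(z,φ) > 0 for all z ∈ Ω. Set μ(z) := φ_z̄(z)/φ_z(z) and let A(z) be the matrix with entries a₁₁ = |1−μ|²/(1−|μ|²), a₁₂ = a₂₁ = −2·Im μ/(1−|μ|²), a₂₂ = |1+μ|²/(1−|μ|²). Then for every C¹ real-valued function f with compact support contained in Ω̃, ∬_Ω ⟨A(z) ∇(f∘φ)(z), ∇(f∘φ)(z)⟩ dx dy = ∬_{Ω̃} |∇f(w)|² du dv. -/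
open MeasureTheory Real

/-- Squared Euclidean norm of the gradient of `f : ℂ → ℝ` at `z`. -/
noncomputable def gradNormSq (f : ℂ → ℝ) (z : ℂ) : ℝ :=
  (fderiv ℝ f z 1) ^ 2 + (fderiv ℝ f z Complex.I) ^ 2

/-- Determinant of a real-linear map on `ℂ` in terms of Wirtinger-type quantities. -/
lemma clm_det_eq (L : ℂ →L[ℝ] ℂ) :
    (L : ℂ →ₗ[ℝ] ℂ).det
      = ‖(L 1 - Complex.I * L Complex.I) / 2‖ ^ 2
        - ‖(L 1 + Complex.I * L Complex.I) / 2‖ ^ 2 := by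
  rw [← LinearMap.det_toMatrix Complex.basisOneI]
  rw [Matrix.det_fin_two]
  simp only [LinearMap.toMatrix_apply, Complex.coe_basisOneI_repr, Complex.coe_basisOneI]
  simp only [Matrix.cons_val_zero, Matrix.cons_val_one, Matrix.head_cons,
    ContinuousLinearMap.coe_coe, ← Complex.sq_norm]
  simp only [Complex.sq_norm, Complex.normSq_apply, Complex.div_re, Complex.div_im,
    Complex.sub_re, Complex.sub_im, Complex.add_re, Complex.add_im, Complex.mul_re,
    Complex.mul_im, Complex.I_re, Complex.I_im, Complex.re_ofNat, Complex.im_ofNat]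
  norm_num; ring

/-- The key algebraic identity for the quadratic form of `A(μ)`. -/
lemma quad_eq (α β : ℂ) (hJ : 0 < ‖α‖ ^ 2 - ‖β‖ ^ 2) (p q : ℝ) :
    quadForm (matrixOfMu (β / α))
      ![p * (α + β).re + q * (α + β).im, p * (β - α).im + q * (α - β).re]
      = (‖α‖ ^ 2 - ‖β‖ ^ 2) * (p ^ 2 + q ^ 2) := by
  have hα : α ≠ 0 := by
    intro h
    simp [h] at hJ
    nlinarith [norm_nonneg β, hJ]
  have hns : Complex.normSq α ≠ 0 := by simpa using (Complex.normSq_pos.mpr hα).ne'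
  have hJ' : Complex.normSq α - Complex.normSq β ≠ 0 := by
    have h1 := Complex.sq_norm α; have h2 := Complex.sq_norm β
    intro h; rw [h1, h2] at hJ; nlinarith
  have e1 : (1 : ℂ) - β / α = (α - β) / α := by field_simp
  have e2 : (1 : ℂ) + β / α = (α + β) / α := by field_simp
  simp only [quadForm, matrixOfMu, Matrix.mulVec, dotProduct, Fin.sum_univ_two,
    Matrix.cons_val', Matrix.cons_val_zero, Matrix.cons_val_one, Matrix.head_cons,
    Matrix.empty_val', Matrix.cons_val_fin_one, Matrix.head_fin_const,
    Matrix.of_apply]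
  rw [e1, e2]
  simp only [← Complex.sq_norm, map_div₀, norm_div, div_pow, Complex.sq_norm, Complex.div_im,
    Complex.normSq_apply, Complex.sub_re, Complex.sub_im, Complex.add_re, Complex.add_im]
  simp only [Complex.normSq_apply] at hns hJ'
  have hns2 : α.re ^ 2 + α.im ^ 2 ≠ 0 := by rw [sq, sq]; exact hns
  have hJ2 : α.re ^ 2 + α.im ^ 2 - (β.re ^ 2 + β.im ^ 2) ≠ 0 := by rw [sq, sq, sq, sq]; exact hJ'
  field_simp
  ring

/-- Pointwise identity: the quadratic form applied to the gradient of `f ∘ φ`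
equals the Jacobian times the squared gradient of `f` at `φ z`. -/
lemma pointwise_identity (φ : ℂ → ℂ) (f : ℂ → ℝ) (z : ℂ)
    (hdφ : DifferentiableAt ℝ φ z) (hdf : DifferentiableAt ℝ f (φ z))
    (hJz : 0 < jacobian φ z) :
    quadForm (matrixOfMu (wirtingerZbar φ z / wirtingerZ φ z)) (gradVec (f ∘ φ) z)
      = jacobian φ z * gradNormSq f (φ z) := by
  set L := fderiv ℝ φ z with hL
  set g := fderiv ℝ f (φ z) with hg
  have hcomp : fderiv ℝ (f ∘ φ) z = g.comp L := fderiv_comp z hdf hdφ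
  set α := wirtingerZ φ z with hαdef
  set β := wirtingerZbar φ z with hβdef
  have h1 : α + β = L 1 := by
    rw [hαdef, hβdef]; unfold wirtingerZ wirtingerZbar; rw [← hL]; ring
  have h2 : Complex.I * (α - β) = L Complex.I := by
    rw [hαdef, hβdef]; unfold wirtingerZ wirtingerZbar; rw [← hL]
    linear_combination (-(L Complex.I)) * Complex.I_mul_I
  have gapp : ∀ w : ℂ, g w = w.re * g 1 + w.im * g Complex.I := by
    intro w
    have hw : w = w.re • (1 : ℂ) + w.im • Complex.I := by
      apply Complex.ext <;> simp
    conv_lhs => rw [hw]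
    rw [map_add, g.map_smul, g.map_smul]; simp [smul_eq_mul]
  have c1 : fderiv ℝ (f ∘ φ) z 1 = g 1 * (α + β).re + g Complex.I * (α + β).im := by
    rw [hcomp, ContinuousLinearMap.comp_apply, gapp (L 1), ← h1]; ring
  have c2 : fderiv ℝ (f ∘ φ) z Complex.I
      = g 1 * (β - α).im + g Complex.I * (α - β).re := by
    rw [hcomp, ContinuousLinearMap.comp_apply, gapp (L Complex.I), ← h2]
    simp only [Complex.mul_re, Complex.mul_im, Complex.I_re, Complex.I_im,
      Complex.sub_re, Complex.sub_im]
    ring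
  have hv : gradVec (f ∘ φ) z
      = ![g 1 * (α + β).re + g Complex.I * (α + β).im,
          g 1 * (β - α).im + g Complex.I * (α - β).re] := by
    unfold gradVec; rw [c1, c2]
  have hJα : 0 < ‖α‖ ^ 2 - ‖β‖ ^ 2 := hJz
  rw [hv, quad_eq α β hJα (g 1) (g Complex.I)]
  rfl

/-- A `C¹`-diffeomorphism `φ : Ω → Ω̃` with positive Jacobian induces, via
`μ = φ_z̄/φ_z` and `A = A(μ)`, an isometry of Dirichlet energies:
`∬_Ω ⟨A ∇(f∘φ), ∇(f∘φ)⟩ = ∬_{Ω̃} |∇f|²` for `C¹` functions `f` compactly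
supported in `Ω̃`. -/
theorem energy_isometry (Ω Ω' : Set ℂ) (hΩ : IsOpen Ω) (hΩ' : IsOpen Ω')
    (φ : ℂ → ℂ) (hφ : ContDiffOn ℝ 1 φ Ω) (hbij : Set.BijOn φ Ω Ω')
    (hJ : ∀ z ∈ Ω, 0 < jacobian φ z)
    (f : ℂ → ℝ) (hf : ContDiff ℝ 1 f) (hfc : HasCompactSupport f)
    (hfs : tsupport f ⊆ Ω') :
    ∫ z in Ω, quadForm (matrixOfMu (wirtingerZbar φ z / wirtingerZ φ z)) (gradVec (f ∘ φ) z) =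
      ∫ w in Ω', gradNormSq f w := by
  have hdf : Differentiable ℝ f := hf.differentiable one_ne_zero
  have hdφ : ∀ z ∈ Ω, DifferentiableAt ℝ φ z := fun z hz =>
    (hφ.contDiffAt (hΩ.mem_nhds hz)).differentiableAt one_ne_zero
  have hF : ∀ z ∈ Ω, HasFDerivWithinAt φ (fderiv ℝ φ z) Ω z := fun z hz =>
    ((hdφ z hz).hasFDerivAt).hasFDerivWithinAt
  rw [← hbij.image_eq,
    integral_image_eq_integral_abs_det_fderiv_smul volume hΩ.measurableSet hF hbij.injOn]
  apply setIntegral_congr_fun hΩ.measurableSet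
  intro z hz
  have hdet : (fderiv ℝ φ z).det = jacobian φ z := clm_det_eq (fderiv ℝ φ z)
  simp only [smul_eq_mul, hdet, abs_of_pos (hJ z hz)]
  exact pointwise_identity φ f z (hdφ z hz) (hdf (φ z)) (hJ z hz)
end

section
/- Let Ω ⊂ ℂ be open, Ω̃ ⊂ ℂ a bounded open set, and φ : Ω → Ω̃ a C¹-diffeomorphism with J(z,φ) > 0 for all z ∈ Ω; set μ(z) := φ_z̄(z)/φ_z(z) and let A(z) be the matrix with entries a₁₁ = |1−μ|²/(1−|μ|²), a₁₂ = a₂₁ = −2·Im μ/(1−|μ|²), a₂₂ = |1+μ|²/(1−|μ|²). Suppose M ≥ 0 satisfies J(w,φ^{−1}) ≤ M for all w ∈ Ω̃, and suppose C ≥ 0 is such that ∬_{Ω̃} |g|² ≤ C² ∬_{Ω̃} |∇g|² for every C¹ real-valued g with compact support in Ω̃. Then for every C¹ real-valued f with compact support in Ω: (∬_Ω |f|² dx dy)^{1/2} ≤ C · M^{1/2} · (∬_Ω ⟨A(z) ∇f(z), ∇f(z)⟩ dx dy)^{1/2}. -/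
open MeasureTheory Real

lemma clm_apply_c {E : Type*} [NormedAddCommGroup E] [NormedSpace ℝ E]
    (L : ℂ →L[ℝ] E) (c : ℂ) : L c = c.re • L 1 + c.im • L Complex.I := by
  rw [← _root_.map_smul, ← _root_.map_smul, ← _root_.map_add]
  congr 1
  simp [Complex.real_smul, Complex.ext_iff]

lemma det_clm (L : ℂ →L[ℝ] ℂ) : L.det =
    ‖(L 1 - Complex.I * L Complex.I) / 2‖ ^ 2
      - ‖(L 1 + Complex.I * L Complex.I) / 2‖ ^ 2 := by
  rw [ContinuousLinearMap.det, ← LinearMap.det_toMatrix Complex.basisOneI,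
    Matrix.det_fin_two]
  simp only [LinearMap.toMatrix_apply, Complex.coe_basisOneI_repr, Complex.coe_basisOneI,
    Matrix.cons_val_zero, Matrix.cons_val_one, Matrix.head_cons, ContinuousLinearMap.coe_coe]
  simp only [norm_div, Complex.norm_two, div_pow, Complex.sq_norm, Complex.normSq_apply,
    Complex.sub_re, Complex.sub_im, Complex.add_re, Complex.add_im, Complex.mul_re,
    Complex.mul_im, Complex.I_re, Complex.I_im]
  ring

lemma det_eq_jacobian (φ : ℂ → ℂ) (z : ℂ) : (fderiv ℝ φ z).det = jacobian φ z :=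
  det_clm (fderiv ℝ φ z)

lemma quad_identity (p q : ℂ) (gx gy : ℝ) (h : ‖q‖ ^ 2 < ‖p‖ ^ 2) :
    quadForm (matrixOfMu (q / p))
      ![(p + q).re * gx + (p + q).im * gy,
        (Complex.I * (p - q)).re * gx + (Complex.I * (p - q)).im * gy]
      = (‖p‖ ^ 2 - ‖q‖ ^ 2) * (gx ^ 2 + gy ^ 2) := by
  have hp : p ≠ 0 := by
    rintro rfl
    simp at h
    nlinarith [norm_nonneg q, h]
  have hnp : Complex.normSq p ≠ 0 := by simpa using hp
  have hnp' : 0 < Complex.normSq p := Complex.normSq_pos.2 hp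
  have habs : ‖q / p‖ ^ 2 = Complex.normSq q / Complex.normSq p := by
    rw [norm_div, div_pow, Complex.sq_norm, Complex.sq_norm]
  have hden : (1 : ℝ) - ‖q / p‖ ^ 2 ≠ 0 := by
    rw [habs]
    have : Complex.normSq q / Complex.normSq p < 1 := by
      rw [div_lt_one hnp']
      rw [← Complex.sq_norm, ← Complex.sq_norm]
      exact h
    linarith
  have h1 : (1 : ℂ) - q / p = (p - q) / p := by field_simp
  have h2 : (1 : ℂ) + q / p = (p + q) / p := by field_simp
  simp only [quadForm, matrixOfMu, Matrix.mulVec, dotProduct, Fin.sum_univ_two,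
    Matrix.of_apply, Matrix.cons_val', Matrix.cons_val_zero, Matrix.cons_val_one, Matrix.head_cons,
    Matrix.empty_val', Matrix.cons_val_fin_one, Matrix.head_fin_const]
  rw [h1, h2, habs]
  simp only [norm_div, div_pow, Complex.sq_norm, Complex.div_im, Complex.normSq_apply,
    Complex.sub_re, Complex.sub_im, Complex.add_re, Complex.add_im, Complex.mul_re,
    Complex.mul_im, Complex.I_re, Complex.I_im]
  have hA : p.re * p.re + p.im * p.im ≠ 0 := by
    rw [Complex.normSq_apply] at hnp; exact hnp
  have hd : p.re * p.re + p.im * p.im - (q.re * q.re + q.im * q.im) ≠ 0 := by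
    have := sub_pos.2 h
    rw [Complex.sq_norm, Complex.sq_norm, Complex.normSq_apply, Complex.normSq_apply] at this
    linarith
  have hBeq : 1 - (q.re * q.re + q.im * q.im) / (p.re * p.re + p.im * p.im)
      = (p.re * p.re + p.im * p.im - (q.re * q.re + q.im * q.im)) / (p.re * p.re + p.im * p.im) := by
    rw [eq_div_iff hA, sub_mul, div_mul_cancel₀ _ hA, one_mul]
  simp only [hBeq]
  have hA2 : p.re ^ 2 + p.im ^ 2 ≠ 0 := by rw [sq, sq]; exact hA
  have hd2 : p.re ^ 2 + p.im ^ 2 - (q.re ^ 2 + q.im ^ 2) ≠ 0 := by rw [sq, sq, sq, sq]; exact hd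
  field_simp
  ring

set_option maxHeartbeats 1000000 in
/-- Sobolev–Poincaré inequality in an `A`-quasiconformal `∞`-regular domain:
if `J(w,φ⁻¹) ≤ M` on `Ω̃` and `C` is a Poincaré constant for `Ω̃`, then
`‖f‖_{L²(Ω)} ≤ C·M^{1/2}·‖f‖_{L^{1,2}_A(Ω)}`. -/
theorem infty_regular_poincare (Ω Ω' : Set ℂ) (hΩ : IsOpen Ω) (hΩ' : IsOpen Ω')
    (hΩ'b : Bornology.IsBounded Ω')
    (φ ψ : ℂ → ℂ) (hφ : ContDiffOn ℝ 1 φ Ω) (hbij : Set.BijOn φ Ω Ω')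
    (hψ : ContDiffOn ℝ 1 ψ Ω') (hinv : Set.InvOn ψ φ Ω Ω')
    (hJ : ∀ z ∈ Ω, 0 < jacobian φ z)
    (M : ℝ) (hM : 0 ≤ M) (hMb : ∀ w ∈ Ω', jacobian ψ w ≤ M)
    (C : ℝ) (hC : 0 ≤ C)
    (hpoin : ∀ g : ℂ → ℝ, ContDiff ℝ 1 g → HasCompactSupport g → tsupport g ⊆ Ω' →
      ∫ w in Ω', g w ^ 2 ≤ C ^ 2 * ∫ w in Ω', gradNormSq g w)
    (f : ℂ → ℝ) (hf : ContDiff ℝ 1 f) (hfc : HasCompactSupport f)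
    (hfs : tsupport f ⊆ Ω) :
    (∫ z in Ω, f z ^ 2) ^ (1 / 2 : ℝ) ≤
      C * M ^ (1 / 2 : ℝ) *
        (∫ z in Ω,
          quadForm (matrixOfMu (wirtingerZbar φ z / wirtingerZ φ z)) (gradVec f z)) ^
          (1 / 2 : ℝ) := by
  classical
  have hψbij : Set.BijOn ψ Ω' Ω := Set.BijOn.symm hinv.symm hbij
  have hΩm : MeasurableSet Ω := hΩ.measurableSet
  have hΩ'm : MeasurableSet Ω' := hΩ'.measurableSet
  have hφd : ∀ z ∈ Ω, DifferentiableAt ℝ φ z := fun z hz =>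
    ((hφ.differentiableOn one_ne_zero).differentiableAt (hΩ.mem_nhds hz))
  have hψd : ∀ w ∈ Ω', DifferentiableAt ℝ ψ w := fun w hw =>
    ((hψ.differentiableOn one_ne_zero).differentiableAt (hΩ'.mem_nhds hw))
  -- the compact image of the support
  have hK : IsCompact (tsupport f) := hfc
  have hφK : IsCompact (φ '' tsupport f) :=
    hK.image_of_continuousOn (hφ.continuousOn.mono hfs)
  have hφKΩ' : φ '' tsupport f ⊆ Ω' := by
    rintro - ⟨z, hz, rfl⟩; exact hbij.mapsTo (hfs hz)
  -- the transplanted function g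
  set g : ℂ → ℝ := Set.indicator Ω' (fun w => f (ψ w)) with hg_def
  have hg_eqOn : ∀ w ∈ Ω', g w = f (ψ w) := fun w hw => Set.indicator_of_mem hw _
  have hg_zero : ∀ w, w ∉ φ '' tsupport f → g w = 0 := by
    intro w hw
    by_cases hw' : w ∈ Ω'
    · rw [hg_eqOn w hw']
      by_contra hne
      have hsupp : ψ w ∈ tsupport f := subset_tsupport f hne
      exact hw ⟨ψ w, hsupp, hinv.2 hw'⟩
    · exact Set.indicator_of_notMem hw' _
  have hgc : HasCompactSupport g := HasCompactSupport.intro hφK hg_zero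
  have htsupp : tsupport g ⊆ Ω' := by
    refine (closure_minimal ?_ hφK.isClosed).trans hφKΩ'
    intro w hw
    by_contra hw'
    exact hw (hg_zero w hw')
  have hg_smooth : ContDiff ℝ 1 g := by
    rw [contDiff_iff_contDiffAt]
    intro x
    by_cases hx : x ∈ Ω'
    · have heq : g =ᶠ[nhds x] fun w => f (ψ w) :=
        Filter.eventuallyEq_of_mem (hΩ'.mem_nhds hx) hg_eqOn
      exact (hf.contDiffAt.comp x ((hψ.contDiffAt (hΩ'.mem_nhds hx)))).congr_of_eventuallyEq heq
    · have hx' : x ∉ φ '' tsupport f := fun hc => hx (hφKΩ' hc)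
      have heq : g =ᶠ[nhds x] fun _ => (0 : ℝ) := by
        filter_upwards [hφK.isClosed.isOpen_compl.mem_nhds hx'] with w hw
        exact hg_zero w hw
      exact contDiffAt_const.congr_of_eventuallyEq heq
  -- f = g ∘ φ on Ω
  have hfg : ∀ z ∈ Ω, f z = g (φ z) := fun z hz => by
    rw [hg_eqOn _ (hbij.mapsTo hz), hinv.1 hz]
  -- chain rule
  have hchain : ∀ z ∈ Ω, fderiv ℝ f z = (fderiv ℝ g (φ z)).comp (fderiv ℝ φ z) := by
    intro z hz
    have heq : f =ᶠ[nhds z] g ∘ φ :=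
      Filter.eventuallyEq_of_mem (hΩ.mem_nhds hz) (fun z' hz' => hfg z' hz')
    rw [heq.fderiv_eq]
    exact fderiv_comp z (hg_smooth.differentiable one_ne_zero (φ z)) (hφd z hz)
  -- determinant of ψ
  have hdetψ_pos : ∀ w ∈ Ω', 0 < jacobian ψ w := by
    intro w hw
    have hzΩ : ψ w ∈ Ω := hψbij.mapsTo hw
    have hw' : φ (ψ w) = w := hinv.2 hw
    have hcomp : (fderiv ℝ ψ (φ (ψ w))).comp (fderiv ℝ φ (ψ w)) = ContinuousLinearMap.id ℝ ℂ := by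
      have h1 : fderiv ℝ (ψ ∘ φ) (ψ w) = (fderiv ℝ ψ (φ (ψ w))).comp (fderiv ℝ φ (ψ w)) :=
        fderiv_comp _ (by rw [hw']; exact hψd w hw) (hφd _ hzΩ)
      have h2 : (ψ ∘ φ) =ᶠ[nhds (ψ w)] id :=
        Filter.eventuallyEq_of_mem (hΩ.mem_nhds hzΩ) (fun z' hz' => hinv.1 hz')
      rw [← h1, h2.fderiv_eq, fderiv_id]
    have hdet : (fderiv ℝ ψ w).det * (fderiv ℝ φ (ψ w)).det = 1 := by
      have := congrArg ContinuousLinearMap.det hcomp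
      rw [hw'] at this
      rwa [ContinuousLinearMap.det, ContinuousLinearMap.toLinearMap_comp, LinearMap.det_comp,
        ContinuousLinearMap.det, ContinuousLinearMap.coe_id, LinearMap.det_id] at this
    have hφpos : 0 < (fderiv ℝ φ (ψ w)).det := by
      rw [det_eq_jacobian]; exact hJ _ hzΩ
    rw [← det_eq_jacobian]
    nlinarith [hdet, hφpos]
  -- derivative data for change of variables
  have hφder : ∀ z ∈ Ω, HasFDerivWithinAt φ (fderiv ℝ φ z) Ω z := fun z hz =>
    ((hφd z hz).hasFDerivAt).hasFDerivWithinAt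
  have hψder : ∀ w ∈ Ω', HasFDerivWithinAt ψ (fderiv ℝ ψ w) Ω' w := fun w hw =>
    ((hψd w hw).hasFDerivAt).hasFDerivWithinAt
  -- change of variables for f²
  have cov1 : ∫ z in Ω, f z ^ 2 = ∫ w in Ω', |(fderiv ℝ ψ w).det| • (f (ψ w) ^ 2) := by
    rw [← hψbij.image_eq]
    exact integral_image_eq_integral_abs_det_fderiv_smul volume hΩ'm hψder hψbij.injOn
      (fun z => f z ^ 2)
  -- integrability facts
  have hf2int : IntegrableOn (fun z => f z ^ 2) Ω := by
    have hs2 : HasCompactSupport (fun z => f z ^ 2) := by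
      apply HasCompactSupport.intro hfc
      intro x hx
      rw [image_eq_zero_of_notMem_tsupport hx]
      norm_num
    exact (((hf.continuous).pow 2).integrable_of_hasCompactSupport hs2).integrableOn
  have hg2int : IntegrableOn (fun w => g w ^ 2) Ω' := by
    have hs2 : HasCompactSupport (fun w => g w ^ 2) := by
      apply HasCompactSupport.intro hgc
      intro x hx
      rw [image_eq_zero_of_notMem_tsupport hx]
      norm_num
    exact (((hg_smooth.continuous).pow 2).integrable_of_hasCompactSupport hs2).integrableOn
  have hlhs_int : IntegrableOn (fun w => |(fderiv ℝ ψ w).det| • (f (ψ w) ^ 2)) Ω' := by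
    have := (integrableOn_image_iff_integrableOn_abs_det_fderiv_smul volume hΩ'm hψder
      hψbij.injOn (fun z => f z ^ 2)).1
    rw [hψbij.image_eq] at this
    exact this hf2int
  -- step 1 : ∫_Ω f² ≤ M * ∫_{Ω'} g²
  have step1 : ∫ z in Ω, f z ^ 2 ≤ M * ∫ w in Ω', g w ^ 2 := by
    rw [cov1, ← MeasureTheory.integral_const_mul]
    refine setIntegral_mono_on hlhs_int (hg2int.const_mul M) hΩ'm ?_
    intro w hw
    have h1 : |(fderiv ℝ ψ w).det| = jacobian ψ w := by
      rw [det_eq_jacobian, abs_of_pos (hdetψ_pos w hw)]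
    rw [smul_eq_mul, h1, ← hg_eqOn w hw]
    have := hMb w hw
    nlinarith [sq_nonneg (g w), hdetψ_pos w hw]
  -- step 2 : Poincaré
  have step2 : ∫ w in Ω', g w ^ 2 ≤ C ^ 2 * ∫ w in Ω', gradNormSq g w :=
    hpoin g hg_smooth hgc htsupp
  -- step 3 : change of variables for the energy
  have step3 : ∫ w in Ω', gradNormSq g w =
      ∫ z in Ω, quadForm (matrixOfMu (wirtingerZbar φ z / wirtingerZ φ z)) (gradVec f z) := by
    rw [← hbij.image_eq,
      integral_image_eq_integral_abs_det_fderiv_smul volume hΩm hφder hbij.injOn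
        (fun w => gradNormSq g w)]
    refine setIntegral_congr_fun hΩm ?_
    intro z hz
    -- pointwise identity
    set p := wirtingerZ φ z with hp_def
    set q := wirtingerZbar φ z with hq_def
    have habs : ‖q‖ ^ 2 < ‖p‖ ^ 2 := by
      have := hJ z hz
      rw [jacobian] at this
      linarith
    have hP1 : fderiv ℝ φ z 1 = p + q := by
      rw [hp_def, hq_def, wirtingerZ, wirtingerZbar]; ring
    have hPI : fderiv ℝ φ z Complex.I = Complex.I * (p - q) := by
      rw [hp_def, hq_def, wirtingerZ, wirtingerZbar]
      linear_combination (fderiv ℝ φ z Complex.I) * Complex.I_sq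
    have hfx : fderiv ℝ f z 1 =
        (p + q).re * (fderiv ℝ g (φ z) 1) + (p + q).im * (fderiv ℝ g (φ z) Complex.I) := by
      rw [hchain z hz]
      simp only [ContinuousLinearMap.comp_apply]
      rw [hP1, clm_apply_c]
      simp [smul_eq_mul]
    have hfy : fderiv ℝ f z Complex.I =
        (Complex.I * (p - q)).re * (fderiv ℝ g (φ z) 1)
          + (Complex.I * (p - q)).im * (fderiv ℝ g (φ z) Complex.I) := by
      rw [hchain z hz]
      simp only [ContinuousLinearMap.comp_apply]
      rw [hPI, clm_apply_c]
      simp [smul_eq_mul]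
    have hdetφ : |(fderiv ℝ φ z).det| = ‖p‖ ^ 2 - ‖q‖ ^ 2 := by
      rw [det_eq_jacobian, abs_of_pos (hJ z hz)]
      rfl
    have hgv : gradVec f z =
        ![(p + q).re * (fderiv ℝ g (φ z) 1) + (p + q).im * (fderiv ℝ g (φ z) Complex.I),
          (Complex.I * (p - q)).re * (fderiv ℝ g (φ z) 1)
            + (Complex.I * (p - q)).im * (fderiv ℝ g (φ z) Complex.I)] := by
      rw [gradVec, hfx, hfy]
    show |(fderiv ℝ φ z).det| • gradNormSq g (φ z)
      = quadForm (matrixOfMu (wirtingerZbar φ z / wirtingerZ φ z)) (gradVec f z)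
    rw [smul_eq_mul, hdetφ, hgv, ← hp_def, ← hq_def, quad_identity p q _ _ habs, gradNormSq]
  -- positivity facts
  have hI3 : 0 ≤ ∫ z in Ω, quadForm (matrixOfMu (wirtingerZbar φ z / wirtingerZ φ z)) (gradVec f z) := by
    rw [← step3]
    exact setIntegral_nonneg hΩ'm (fun w _ => by
      rw [gradNormSq]; positivity)
  have hI0 : 0 ≤ ∫ z in Ω, f z ^ 2 :=
    setIntegral_nonneg hΩm (fun z _ => sq_nonneg _)
  -- assemble
  have hchain_le : ∫ z in Ω, f z ^ 2 ≤
      C ^ 2 * M * ∫ z in Ω, quadForm (matrixOfMu (wirtingerZbar φ z / wirtingerZ φ z)) (gradVec f z) := by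
    calc ∫ z in Ω, f z ^ 2 ≤ M * ∫ w in Ω', g w ^ 2 := step1
      _ ≤ M * (C ^ 2 * ∫ w in Ω', gradNormSq g w) := by
          exact mul_le_mul_of_nonneg_left step2 hM
      _ = C ^ 2 * M * ∫ z in Ω, quadForm (matrixOfMu (wirtingerZbar φ z / wirtingerZ φ z)) (gradVec f z) := by
          rw [step3]; ring
  have hfinal := Real.rpow_le_rpow hI0 hchain_le (by norm_num : (0:ℝ) ≤ 1/2)
  refine hfinal.trans_eq ?_
  rw [Real.mul_rpow (by positivity) hI3, Real.mul_rpow (by positivity) hM]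
  have hCpow : ((C ^ 2 : ℝ)) ^ (1/2 : ℝ) = C := by
    rw [← Real.rpow_natCast C 2, ← Real.rpow_mul hC]
    norm_num
  rw [hCpow]
end

section
/- Let Ω ⊂ ℂ be open and let φ : Ω → 𝔻 be a C¹-diffeomorphism onto the open unit disc 𝔻 with J(z,φ) = 1 for all z ∈ Ω. Set μ(z) := φ_z̄(z)/φ_z(z) and let A(z) be the matrix with entries a₁₁ = |1−μ|²/(1−|μ|²), a₁₂ = a₂₁ = −2·Im μ/(1−|μ|²), a₂₂ = |1+μ|²/(1−|μ|²). If C ≥ 0 is such that ∬_𝔻 |g|² ≤ C ∬_𝔻 |∇g|² for every C¹ real-valued g with compact support in 𝔻, then for every C¹ real-valued f with compact support in Ω: ∬_Ω |f|² dx dy ≤ C · ∬_Ω ⟨A(z) ∇f(z), ∇f(z)⟩ dx dy. In particular, the infimum of the Rayleigh quotient ∬_Ω ⟨A∇f, ∇f⟩ / ∬_Ω |f|² over nonzero such f is at least the infimum of ∬_𝔻 |∇g|² / ∬_𝔻 |g|² over nonzero such g. -/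
open MeasureTheory Real Topology Filter



theorem clm_det (L : ℂ →L[ℝ] ℂ) :
    L.det = (L 1).re * (L Complex.I).im - (L Complex.I).re * (L 1).im := by
  have : L.det = LinearMap.det (L : ℂ →ₗ[ℝ] ℂ) := rfl
  rw [this, ← LinearMap.det_toMatrix Complex.basisOneI, Matrix.det_fin_two]
  simp [LinearMap.toMatrix_apply, Complex.coe_basisOneI_repr, Complex.coe_basisOneI]

theorem jacobian_eq (φ : ℂ → ℂ) (z : ℂ) : jacobian φ z = (fderiv ℝ φ z).det := by
  rw [clm_det]
  simp only [jacobian, wirtingerZ, wirtingerZbar, Complex.sq_norm, Complex.normSq_apply,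
    Complex.div_re, Complex.div_im, Complex.sub_re, Complex.sub_im, Complex.add_re,
    Complex.add_im, Complex.mul_re, Complex.mul_im, Complex.I_re, Complex.I_im,
    Complex.re_ofNat, Complex.im_ofNat, Complex.normSq_ofNat]
  ring

theorem wirt_sum (φ : ℂ → ℂ) (z : ℂ) :
    wirtingerZ φ z + wirtingerZbar φ z = fderiv ℝ φ z 1 := by
  rw [wirtingerZ, wirtingerZbar]; ring

theorem wirt_diff (φ : ℂ → ℂ) (z : ℂ) :
    Complex.I * (wirtingerZ φ z - wirtingerZbar φ z) = fderiv ℝ φ z Complex.I := by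
  rw [wirtingerZ, wirtingerZbar]
  ring_nf
  rw [Complex.I_sq]
  ring

theorem clm_apply_complex (L : ℂ →L[ℝ] ℝ) (c : ℂ) :
    L c = c.re * L 1 + c.im * L Complex.I := by
  have h : c = c.re • (1 : ℂ) + c.im • Complex.I := by
    simp [Complex.real_smul, Complex.re_add_im]
  conv_lhs => rw [h]
  rw [map_add, L.map_smul, L.map_smul, smul_eq_mul, smul_eq_mul]
theorem keyalg (p q : ℂ) (h : ‖p‖ ^ 2 - ‖q‖ ^ 2 = 1) (s t : ℝ) :
    quadForm (matrixOfMu (q / p))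
      ![s * (p + q).re + t * (p + q).im,
        s * (Complex.I * (p - q)).re + t * (Complex.I * (p - q)).im] = s ^ 2 + t ^ 2 := by
  have hb2 : ‖p‖ ^ 2 ≠ 0 := by nlinarith [sq_nonneg (‖q‖)]
  have hp : p ≠ 0 := fun h0 => by simp [h0] at hb2
  have he : p.re ^ 2 + p.im ^ 2 - q.re ^ 2 - q.im ^ 2 = 1 := by
    rw [Complex.sq_norm, Complex.sq_norm, Complex.normSq_apply, Complex.normSq_apply] at h
    ring_nf at h ⊢; linarith
  have hN : p.re ^ 2 + p.im ^ 2 ≠ 0 := by nlinarith [sq_nonneg q.re, sq_nonneg q.im]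
  have hden : 1 - ‖q / p‖ ^ 2 = 1 / ‖p‖ ^ 2 := by
    rw [norm_div, div_pow]
    field_simp
    linarith
  have hc : ∀ x : ℝ, x / ‖p‖ ^ 2 / (1 / ‖p‖ ^ 2) = x := fun x => by
    field_simp
  have h1 : (1 : ℂ) - q / p = (p - q) / p := by field_simp
  have h2 : (1 : ℂ) + q / p = (p + q) / p := by field_simp
  have e11 : ‖1 - q / p‖ ^ 2 / (1 - ‖q / p‖ ^ 2) =
      (p.re - q.re) ^ 2 + (p.im - q.im) ^ 2 := by
    rw [h1, hden, norm_div, div_pow]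
    rw [hc, Complex.sq_norm, Complex.normSq_apply, Complex.sub_re, Complex.sub_im]
    ring
  have e22 : ‖1 + q / p‖ ^ 2 / (1 - ‖q / p‖ ^ 2) =
      (p.re + q.re) ^ 2 + (p.im + q.im) ^ 2 := by
    rw [h2, hden, norm_div, div_pow]
    rw [hc, Complex.sq_norm, Complex.normSq_apply, Complex.add_re, Complex.add_im]
    ring
  have e12 : -2 * (q / p).im / (1 - ‖q / p‖ ^ 2) =
      -2 * (q.im * p.re - q.re * p.im) := by
    have hN2 : p.re * p.re + p.im * p.im ≠ 0 := by intro h0; apply hN; nlinarith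
    rw [hden, Complex.div_im, Complex.sq_norm, Complex.normSq_apply]
    field_simp
  rw [show matrixOfMu (q / p) =
      !![(p.re - q.re) ^ 2 + (p.im - q.im) ^ 2, -2 * (q.im * p.re - q.re * p.im);
         -2 * (q.im * p.re - q.re * p.im), (p.re + q.re) ^ 2 + (p.im + q.im) ^ 2] by
    rw [matrixOfMu, e11, e22, e12]]
  simp [quadForm, Matrix.mulVec, dotProduct, Fin.sum_univ_two, Complex.add_re,
    Complex.add_im, Complex.sub_re, Complex.sub_im, Complex.mul_re, Complex.mul_im,
    Complex.I_re, Complex.I_im]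
  linear_combination ((p.re ^ 2 + p.im ^ 2 - q.re ^ 2 - q.im ^ 2) + 1) * (s ^ 2 + t ^ 2) * he

theorem transfer (Ω : Set ℂ) (hΩ : IsOpen Ω) (φ : ℂ → ℂ) (hφ : ContDiffOn ℝ 1 φ Ω)
    (hbij : Set.BijOn φ Ω (Metric.ball (0 : ℂ) 1))
    (hJ : ∀ z ∈ Ω, jacobian φ z = 1)
    (f : ℂ → ℝ) (hf1 : ContDiff ℝ 1 f) (hf2 : HasCompactSupport f) (hf3 : tsupport f ⊆ Ω) :
    ∃ g : ℂ → ℝ, ContDiff ℝ 1 g ∧ HasCompactSupport g ∧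
      tsupport g ⊆ Metric.ball (0 : ℂ) 1 ∧ (f ≠ 0 → g ≠ 0) ∧
      (∫ w in Metric.ball (0 : ℂ) 1, g w ^ 2) = (∫ z in Ω, f z ^ 2) ∧
      (∫ w in Metric.ball (0 : ℂ) 1, gradNormSq g w) =
        ∫ z in Ω, quadForm (matrixOfMu (wirtingerZbar φ z / wirtingerZ φ z)) (gradVec f z) := by
  classical
  set D := Metric.ball (0 : ℂ) 1 with hD
  have himg : φ '' Ω = D := hbij.image_eq
  have hdiff : ∀ z ∈ Ω, DifferentiableAt ℝ φ z := fun z hz =>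
    (hφ.contDiffAt (hΩ.mem_nhds hz)).differentiableAt one_ne_zero
  have hdet : ∀ z ∈ Ω, (fderiv ℝ φ z).det = 1 := fun z hz => by
    rw [← jacobian_eq]; exact hJ z hz
  -- the inverse map
  set ψ := Function.invFunOn φ Ω with hψdef
  have hleft : ∀ z ∈ Ω, ψ (φ z) = z := fun z hz => hbij.injOn.leftInvOn_invFunOn hz
  have hmem : ∀ w ∈ D, ψ w ∈ Ω := by
    intro w hw
    obtain ⟨z, hz, hzw⟩ := hbij.surjOn hw
    exact Function.invFunOn_mem ⟨z, hz, hzw⟩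
  have hright : ∀ w ∈ D, φ (ψ w) = w := by
    intro w hw
    obtain ⟨z, hz, hzw⟩ := hbij.surjOn hw
    exact Function.invFunOn_eq ⟨z, hz, hzw⟩
  -- ψ is C¹ on D by the inverse function theorem
  have hψ : ∀ w ∈ D, ContDiffAt ℝ 1 ψ w := by
    intro w hw
    have hzΩ : ψ w ∈ Ω := hmem w hw
    have hφψw : φ (ψ w) = w := hright w hw
    have hca : ContDiffAt ℝ 1 φ (ψ w) := hφ.contDiffAt (hΩ.mem_nhds hzΩ)
    set e := (fderiv ℝ φ (ψ w)).toContinuousLinearEquivOfDetNeZero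
      (by rw [hdet _ hzΩ]; exact one_ne_zero) with he
    have hfd : HasFDerivAt φ (e : ℂ →L[ℝ] ℂ) (ψ w) := by
      rw [he, ContinuousLinearMap.coe_toContinuousLinearEquivOfDetNeZero]
      exact (hdiff _ hzΩ).hasFDerivAt
    have hloc : ContDiffAt ℝ 1 (hca.localInverse hfd one_ne_zero) w := by
      have := hca.to_localInverse (f' := e) (hf' := hfd) (hn := one_ne_zero)
      rwa [hφψw] at this
    apply hloc.congr_of_eventuallyEq
    -- ψ agrees with the local inverse near w
    have hs := hca.hasStrictFDerivAt' hfd one_ne_zero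
    have h1 : ∀ᶠ y in 𝓝 w, φ (hca.localInverse hfd one_ne_zero y) = y := by
      have := hs.eventually_right_inverse
      rwa [hφψw] at this
    have h2 : ∀ᶠ y in 𝓝 w, hca.localInverse hfd one_ne_zero y ∈ Ω := by
      have hcont : ContinuousAt (hca.localInverse hfd one_ne_zero) w := by
        have := hs.localInverse_continuousAt
        rwa [hφψw] at this
      have hval : hca.localInverse hfd one_ne_zero w = ψ w := by
        have := hca.localInverse_apply_image (hf' := hfd) (hn := one_ne_zero)
        rwa [hφψw] at this
      exact hcont.eventually_mem (by rw [hval]; exact hΩ.mem_nhds hzΩ)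
    filter_upwards [h1, h2] with y hy1 hy2
    conv_lhs => rw [← hy1]
    exact hleft _ hy2
  -- the transferred function
  set g : ℂ → ℝ := fun w => if w ∈ D then f (ψ w) else 0 with hgdef
  have hgφ : ∀ z ∈ Ω, g (φ z) = f z := by
    intro z hz
    rw [hgdef]
    simp only [hbij.mapsTo hz, if_pos]
    rw [hleft z hz]
  have hKc : IsCompact (φ '' tsupport f) :=
    (hf2.isCompact).image_of_continuousOn (hφ.continuousOn.mono hf3)
  have hKD : φ '' tsupport f ⊆ D := himg ▸ Set.image_mono (f := φ) hf3
  have hsupp : Function.support g ⊆ φ '' tsupport f := by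
    intro w hw
    rw [Function.mem_support, hgdef] at hw
    by_cases hwD : w ∈ D
    · simp only [hwD, if_pos] at hw
      exact ⟨ψ w, subset_tsupport f hw, hright w hwD⟩
    · simp [hwD] at hw
  have hg2 : HasCompactSupport g :=
    HasCompactSupport.intro hKc fun w hw => by
      by_contra h0
      exact hw (hsupp h0)
  have hg3 : tsupport g ⊆ D :=
    (closure_minimal hsupp hKc.isClosed).trans hKD
  have hg1 : ContDiff ℝ 1 g := by
    rw [contDiff_iff_contDiffAt]
    intro w
    by_cases hwD : w ∈ D
    · have : g =ᶠ[𝓝 w] fun y => f (ψ y) := by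
        filter_upwards [Metric.isOpen_ball.mem_nhds hwD] with y hy
        rw [hgdef]; simp only [show y ∈ D from hy, if_pos]
      exact (((hf1.contDiffAt).comp w (hψ w hwD))).congr_of_eventuallyEq this
    · have hwK : w ∉ φ '' tsupport f := fun h => hwD (hKD h)
      have : g =ᶠ[𝓝 w] fun _ => 0 := by
        filter_upwards [hKc.isClosed.isOpen_compl.mem_nhds hwK] with y hy
        by_contra h0
        exact hy (hsupp fun hc => h0 hc)
      exact contDiffAt_const.congr_of_eventuallyEq this
  have hgne : f ≠ 0 → g ≠ 0 := by
    intro hf0 hg0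
    apply hf0
    funext z
    by_cases hz : z ∈ Ω
    · have := hgφ z hz
      rw [hg0] at this
      exact (congrFun (rfl : (0 : ℂ → ℝ) = 0) z ▸ this.symm).trans rfl
    · have : z ∉ tsupport f := fun h => hz (hf3 h)
      simp [image_eq_zero_of_notMem_tsupport this]
  -- change of variables
  have hder : ∀ z ∈ Ω, HasFDerivWithinAt φ (fderiv ℝ φ z) Ω z := fun z hz =>
    (hdiff z hz).hasFDerivAt.hasFDerivWithinAt
  have hI1 : (∫ w in D, g w ^ 2) = ∫ z in Ω, f z ^ 2 := by
    rw [← himg, integral_image_eq_integral_abs_det_fderiv_smul volume hΩ.measurableSet hder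
      hbij.injOn (fun w => g w ^ 2)]
    apply setIntegral_congr_fun hΩ.measurableSet
    intro z hz
    simp [hdet z hz, hgφ z hz]
  have hgrad : ∀ z ∈ Ω, gradNormSq g (φ z) =
      quadForm (matrixOfMu (wirtingerZbar φ z / wirtingerZ φ z)) (gradVec f z) := by
    intro z hz
    set p := wirtingerZ φ z
    set q := wirtingerZbar φ z
    set s := fderiv ℝ g (φ z) 1
    set t := fderiv ℝ g (φ z) Complex.I
    have hfg : f =ᶠ[𝓝 z] g ∘ φ := by
      filter_upwards [hΩ.mem_nhds hz] with y hy
      exact (hgφ y hy).symm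
    have hdf : fderiv ℝ f z = (fderiv ℝ g (φ z)).comp (fderiv ℝ φ z) := by
      rw [hfg.fderiv_eq]
      exact fderiv_comp z ((hg1.differentiable one_ne_zero) (φ z)) (hdiff z hz)
    have hJz : ‖p‖ ^ 2 - ‖q‖ ^ 2 = 1 := hJ z hz
    have h0 : fderiv ℝ f z 1 = s * (p + q).re + t * (p + q).im := by
      rw [hdf, ContinuousLinearMap.comp_apply,
        clm_apply_complex (fderiv ℝ g (φ z)) (fderiv ℝ φ z 1), ← wirt_sum φ z]
      ring
    have h1 : fderiv ℝ f z Complex.I =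
        s * (Complex.I * (p - q)).re + t * (Complex.I * (p - q)).im := by
      rw [hdf, ContinuousLinearMap.comp_apply,
        clm_apply_complex (fderiv ℝ g (φ z)) (fderiv ℝ φ z Complex.I), ← wirt_diff φ z]
      ring
    have hvec : gradVec f z = ![s * (p + q).re + t * (p + q).im,
        s * (Complex.I * (p - q)).re + t * (Complex.I * (p - q)).im] := by
      rw [gradVec, h0, h1]
    rw [hvec, keyalg p q hJz s t, gradNormSq]
  have hI2 : (∫ w in D, gradNormSq g w) =
      ∫ z in Ω, quadForm (matrixOfMu (wirtingerZbar φ z / wirtingerZ φ z)) (gradVec f z) := by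
    rw [← himg, integral_image_eq_integral_abs_det_fderiv_smul volume hΩ.measurableSet hder
      hbij.injOn (fun w => gradNormSq g w)]
    apply setIntegral_congr_fun hΩ.measurableSet
    intro z hz
    simp only [hdet z hz, abs_one, one_smul]
    exact hgrad z hz
  exact ⟨g, hg1, hg2, hg3, hgne, hI1, hI2⟩

/-- Lower eigenvalue estimate `λ₁(A,Ω) ≥ λ₁(𝔻)` in a volume-preserving
`A`-quasiconformal regular domain: the Poincaré inequality transfers from the unit
disc `𝔻` to `Ω`, and the infimum of the Rayleigh quotient for `A` on `Ω` is at least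
the infimum of the Rayleigh quotient on `𝔻`. -/
theorem lower_eigenvalue_estimate (Ω : Set ℂ) (hΩ : IsOpen Ω)
    (φ : ℂ → ℂ) (hφ : ContDiffOn ℝ 1 φ Ω)
    (hbij : Set.BijOn φ Ω (Metric.ball (0 : ℂ) 1))
    (hJ : ∀ z ∈ Ω, jacobian φ z = 1)
    (C : ℝ) (hC : 0 ≤ C)
    (hpoin : ∀ g : ℂ → ℝ, ContDiff ℝ 1 g → HasCompactSupport g →
      tsupport g ⊆ Metric.ball (0 : ℂ) 1 →
      (∫ w in Metric.ball (0 : ℂ) 1, g w ^ 2) ≤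
        C * ∫ w in Metric.ball (0 : ℂ) 1, gradNormSq g w) :
    (∀ f : ℂ → ℝ, ContDiff ℝ 1 f → HasCompactSupport f → tsupport f ⊆ Ω →
      (∫ z in Ω, f z ^ 2) ≤
        C * ∫ z in Ω,
          quadForm (matrixOfMu (wirtingerZbar φ z / wirtingerZ φ z)) (gradVec f z)) ∧
    sInf {q : ℝ | ∃ g : ℂ → ℝ, ContDiff ℝ 1 g ∧ HasCompactSupport g ∧
        tsupport g ⊆ Metric.ball (0 : ℂ) 1 ∧ g ≠ 0 ∧
        q = (∫ w in Metric.ball (0 : ℂ) 1, gradNormSq g w) /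
          ∫ w in Metric.ball (0 : ℂ) 1, g w ^ 2} ≤
      sInf {q : ℝ | ∃ f : ℂ → ℝ, ContDiff ℝ 1 f ∧ HasCompactSupport f ∧
        tsupport f ⊆ Ω ∧ f ≠ 0 ∧
        q = (∫ z in Ω,
            quadForm (matrixOfMu (wirtingerZbar φ z / wirtingerZ φ z)) (gradVec f z)) /
          ∫ z in Ω, f z ^ 2} := by
  have key := transfer Ω hΩ φ hφ hbij hJ
  constructor
  · intro f hf1 hf2 hf3
    obtain ⟨g, hg1, hg2, hg3, _, hI1, hI2⟩ := key f hf1 hf2 hf3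
    rw [← hI1, ← hI2]
    exact hpoin g hg1 hg2 hg3
  · have hbdd : BddBelow {q : ℝ | ∃ g : ℂ → ℝ, ContDiff ℝ 1 g ∧ HasCompactSupport g ∧
        tsupport g ⊆ Metric.ball (0 : ℂ) 1 ∧ g ≠ 0 ∧
        q = (∫ w in Metric.ball (0 : ℂ) 1, gradNormSq g w) /
          ∫ w in Metric.ball (0 : ℂ) 1, g w ^ 2} := by
      refine ⟨0, fun x hx => ?_⟩
      obtain ⟨g, _, _, _, _, rfl⟩ := hx
      apply div_nonneg
      · exact setIntegral_nonneg Metric.isOpen_ball.measurableSet fun w _ => by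
          simp only [gradNormSq]; positivity
      · exact setIntegral_nonneg Metric.isOpen_ball.measurableSet fun w _ => by positivity
    -- the Ω-Rayleigh set is nonempty, via a bump function
    have hΩne : Ω.Nonempty := by
      obtain ⟨z, hz, -⟩ := hbij.surjOn (Metric.mem_ball_self one_pos)
      exact ⟨z, hz⟩
    obtain ⟨z₀, hz₀⟩ := hΩne
    obtain ⟨r, hr, hball⟩ := Metric.isOpen_iff.1 hΩ z₀ hz₀
    set bump : ContDiffBump z₀ := ⟨r / 2, 2 * r / 3, by positivity, by linarith⟩ with hbump
    have hb1 : ContDiff ℝ 1 (fun x => bump x) := bump.contDiff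
    have hb2 : HasCompactSupport (fun x => bump x) := bump.hasCompactSupport
    have hb3 : tsupport (fun x => bump x) ⊆ Ω := by
      rw [bump.tsupport_eq]
      exact (Metric.closedBall_subset_ball (by rw [hbump]; simpa using by linarith)).trans hball
    have hb0 : (fun x => bump x) ≠ 0 := by
      intro h0
      have h1 : bump z₀ = 1 := bump.one_of_mem_closedBall
        (Metric.mem_closedBall_self (by rw [hbump]; simpa using by linarith))
      rw [show bump z₀ = (fun x => bump x) z₀ from rfl, h0] at h1
      simp at h1
    apply le_csInf
    · exact ⟨_, (fun x => bump x), hb1, hb2, hb3, hb0, rfl⟩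
    · intro b hb
      obtain ⟨f, hf1, hf2, hf3, hf0, rfl⟩ := hb
      obtain ⟨g, hg1, hg2, hg3, hgne, hI1, hI2⟩ := key f hf1 hf2 hf3
      exact csInf_le hbdd ⟨g, hg1, hg2, hg3, hgne hf0, by rw [hI1, hI2]⟩
end

section
/- Define φ : ℂ → ℂ by φ(z) = z·e^{2i·log|z|} for z ≠ 0 and φ(0) = 0. Then φ restricts to a bijection of the open unit disc 𝔻 = {z ∈ ℂ : |z| < 1} onto itself, and for every z ≠ 0, φ is real-differentiable at z with Wirtinger derivatives satisfying φ_z̄(z) = ((1+i)/2)·(z/z̄)·φ_z(z) and Jacobian J(z,φ) = |φ_z(z)|² − |φ_z̄(z)|² = 1. -/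
/-- The spiral map `φ(z) = z·e^{2i·log|z|}`, `φ(0) = 0`. -/
noncomputable def spiralMap (z : ℂ) : ℂ :=
  if z = 0 then 0 else z * Complex.exp (2 * Complex.I * (Real.log ‖z‖ : ℂ))

/-- The inverse spiral map. -/
noncomputable def spiralInv (z : ℂ) : ℂ :=
  if z = 0 then 0 else z * Complex.exp (-(2 * Complex.I * (Real.log ‖z‖ : ℂ)))

lemma abs_exp_two_I_log (t : ℝ) :
    ‖Complex.exp (2 * Complex.I * (t : ℂ))‖ = 1 := by
  rw [Complex.norm_exp]
  simp

lemma abs_spiralMap (z : ℂ) : ‖spiralMap z‖ = ‖z‖ := by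
  unfold spiralMap
  by_cases hz : z = 0
  · simp [hz]
  · rw [if_neg hz, norm_mul, abs_exp_two_I_log, mul_one]

lemma abs_spiralInv (z : ℂ) : ‖spiralInv z‖ = ‖z‖ := by
  unfold spiralInv
  by_cases hz : z = 0
  · simp [hz]
  · rw [if_neg hz, norm_mul, Complex.norm_exp]
    simp

lemma spiralInv_spiralMap (z : ℂ) : spiralInv (spiralMap z) = z := by
  by_cases hz : z = 0
  · simp [hz, spiralMap, spiralInv]
  · have hz' : spiralMap z ≠ 0 := by
      intro h
      apply hz
      have := abs_spiralMap z
      rw [h] at this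
      simpa using this.symm
    rw [spiralInv, if_neg hz', abs_spiralMap]
    rw [spiralMap, if_neg hz, mul_assoc, ← Complex.exp_add]
    simp

lemma spiralMap_spiralInv (z : ℂ) : spiralMap (spiralInv z) = z := by
  by_cases hz : z = 0
  · simp [hz, spiralMap, spiralInv]
  · have hz' : spiralInv z ≠ 0 := by
      intro h
      apply hz
      have := abs_spiralInv z
      rw [h] at this
      simpa using this.symm
    rw [spiralMap, if_neg hz', abs_spiralInv]
    rw [spiralInv, if_neg hz, mul_assoc, ← Complex.exp_add]
    simp

lemma spiralMap_eq : spiralMap = fun w : ℂ =>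
    w * Complex.exp (Complex.I * Complex.log (w * (starRingEnd ℂ) w)) := by
  funext w
  unfold spiralMap
  by_cases hw : w = 0
  · simp [hw]
  · rw [if_neg hw, Complex.mul_conj, ← Complex.ofReal_log (Complex.normSq_nonneg w),
      Complex.normSq_eq_norm_sq, Real.log_pow]
    push_cast
    ring_nf

/-- The map `φ(z) = z·e^{2i·log|z|}` is a bijection of the unit disc onto itself,
is real-differentiable away from the origin, and satisfies
`φ_z̄ = ((1+i)/2)·(z/z̄)·φ_z` and `J(z,φ) = 1` for all `z ≠ 0`. -/
theorem spiralMap_properties :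
    Set.BijOn spiralMap (Metric.ball (0 : ℂ) 1) (Metric.ball (0 : ℂ) 1) ∧
    ∀ z : ℂ, z ≠ 0 →
      DifferentiableAt ℝ spiralMap z ∧
      wirtingerZbar spiralMap z =
        ((1 + Complex.I) / 2) * (z / starRingEnd ℂ z) * wirtingerZ spiralMap z ∧
      jacobian spiralMap z = 1 := by
  constructor
  · refine ⟨fun w hw => ?_, fun a _ b _ hab => ?_, fun w hw => ?_⟩
    · simpa [Metric.mem_ball, Complex.dist_eq, abs_spiralMap] using hw
    · have := congrArg spiralInv hab
      rwa [spiralInv_spiralMap, spiralInv_spiralMap] at this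
    · refine ⟨spiralInv w, ?_, spiralMap_spiralInv w⟩
      simpa [Metric.mem_ball, Complex.dist_eq, abs_spiralInv] using hw
  · intro z h
    set c := (starRingEnd ℂ) z with hc_def
    have hc : c ≠ 0 := by simpa [hc_def] using h
    have hs : z * c ∈ Complex.slitPlane := by
      rw [hc_def, Complex.mul_conj]
      exact Or.inl (by simpa using Complex.normSq_pos.2 h)
    have h1 := (hasFDerivAt_id z).mul Complex.conjCLE.hasFDerivAt
    have h2 := (((Complex.hasDerivAt_log hs).hasFDerivAt).restrictScalars ℝ).comp z h1
    have h3 := h2.const_mul Complex.I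
    have h4 := (((Complex.hasDerivAt_exp _).hasFDerivAt).restrictScalars ℝ).comp z h3
    have h5 := (hasFDerivAt_id z).mul h4
    simp only [Function.comp_def, Pi.mul_def, id_eq, Complex.conjCLE_apply] at h5
    rw [← hc_def, ← spiralMap_eq] at h5
    set E := Complex.exp (Complex.I * Complex.log (z * c)) with hE_def
    have hz1 := congrArg (fun D : ℂ →L[ℝ] ℂ => D 1) (h5.fderiv)
    have hzI := congrArg (fun D : ℂ →L[ℝ] ℂ => D Complex.I) (h5.fderiv)
    simp only [ContinuousLinearMap.add_apply, ContinuousLinearMap.smul_apply,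
      ContinuousLinearMap.comp_apply, ContinuousLinearMap.coe_restrictScalars',
      ContinuousLinearMap.smulRight_apply, ContinuousLinearMap.one_apply,
      ContinuousLinearMap.id_apply, Complex.conjCLE_apply, smul_eq_mul,
      ContinuousLinearEquiv.coe_coe, map_one, map_mul, Complex.conj_I,
      Complex.conj_conj, ContinuousLinearMap.toSpanSingleton_apply, ← hc_def, ← hE_def] at hz1 hzI
    have hzz : wirtingerZ spiralMap z = E * (1 + Complex.I) := by
      rw [wirtingerZ, hz1, hzI]
      field_simp
      linear_combination (E*(Complex.I*z - Complex.I*c - c)) * Complex.I_sq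
    have hzbar : wirtingerZbar spiralMap z = E * Complex.I * z / c := by
      rw [wirtingerZbar, hz1, hzI]
      field_simp
      linear_combination (E*(c - Complex.I*z + Complex.I*c)) * Complex.I_sq
    have habsE : ‖E‖ = 1 := by
      rw [hE_def, hc_def, Complex.mul_conj, ← Complex.ofReal_log (Complex.normSq_nonneg z),
        Complex.norm_exp]
      simp
    have habsc : ‖c‖ = ‖z‖ := by
      rw [hc_def, Complex.norm_conj]
    refine ⟨h5.differentiableAt, ?_, ?_⟩
    · rw [hzz, hzbar]
      field_simp
      linear_combination (-E) * Complex.I_sq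
    · rw [jacobian, hzz, hzbar]
      rw [norm_mul, norm_div, norm_mul, norm_mul, habsE, habsc, Complex.norm_I]
      have h2' : ‖1 + Complex.I‖ ^ 2 = 2 := by
        rw [Complex.sq_norm]
        norm_num [Complex.normSq_apply]
      have hza : ‖z‖ ≠ 0 := by simpa using h
      field_simp [h2']
      norm_num [h2']
end

section
/- Define φ : ℂ → ℂ by φ(z) = z²/(√2·|z|) − 1 for z ≠ 0 and φ(0) = −1. Then: (1) φ maps the interior of the rose petal Ω_p = {ρe^{iθ} : 0 < ρ < 2√2·cos(2θ), −π/4 < θ < π/4} bijectively onto the open unit disc 𝔻; (2) for every z ≠ 0, φ is real-differentiable at z with Wirtinger derivatives satisfying φ_z̄(z) = −(1/3)·(z/z̄)·φ_z(z) and Jacobian J(z,φ) = |φ_z(z)|² − |φ_z̄(z)|² = 1. -/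
open Real

/-- The petal map `φ(z) = z²/(√2·|z|) − 1` for `z ≠ 0`, `φ(0) = −1`
(i.e. `φ(z) = z^{3/2}/(√2·z̄^{1/2}) − 1`). -/
noncomputable def petalMap (z : ℂ) : ℂ :=
  if z = 0 then -1 else z ^ 2 / ((Real.sqrt 2 : ℂ) * ((‖z‖ : ℝ) : ℂ)) - 1

/-- The interior of the rose petal `ρ = 2√2·cos(2θ)`, `−π/4 < θ < π/4`. -/
noncomputable def petalDomain : Set ℂ :=
  {w : ℂ | ∃ ρ θ : ℝ, -(π / 4) < θ ∧ θ < π / 4 ∧ 0 < ρ ∧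
    ρ < 2 * Real.sqrt 2 * Real.cos (2 * θ) ∧
    w = (ρ : ℂ) * Complex.exp ((θ : ℂ) * Complex.I)}

lemma abs_hasFDerivAt {z : ℂ} (hz : z ≠ 0) :
    HasFDerivAt (fun w : ℂ => ‖w‖)
      ((‖z‖)⁻¹ • (innerSL ℝ z : ℂ →L[ℝ] ℝ)) z := by
  have h2 : ‖z‖ ^ 2 ≠ 0 := pow_ne_zero 2 (norm_ne_zero_iff.2 hz)
  have hsq : HasFDerivAt (fun w : ℂ => ‖w‖ ^ 2) (2 • (innerSL ℝ z)) z :=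
    (hasStrictFDerivAt_norm_sq z).hasFDerivAt
  have hsqrt : HasDerivAt Real.sqrt (1 / (2 * Real.sqrt (‖z‖ ^ 2))) (‖z‖ ^ 2) :=
    Real.hasDerivAt_sqrt h2
  have H := hsqrt.comp_hasFDerivAt z hsq
  have heq : (fun w : ℂ => Real.sqrt (‖w‖ ^ 2)) = fun w : ℂ => ‖w‖ := by
    funext w; rw [Real.sqrt_sq (norm_nonneg w)]
  rw [Function.comp_def, heq] at H
  have hE : ((1 / (2 * Real.sqrt (‖z‖ ^ 2))) • 2 • (innerSL ℝ z) : ℂ →L[ℝ] ℝ)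
      = (‖z‖)⁻¹ • (innerSL ℝ z : ℂ →L[ℝ] ℝ) := by
    ext w
    simp [Real.sqrt_sq (norm_nonneg z)]
    ring
  rwa [hE] at H

lemma petalMap_fderiv {z : ℂ} (hz : z ≠ 0) :
    DifferentiableAt ℝ petalMap z ∧
    fderiv ℝ petalMap z 1 =
      2 * z / ((Real.sqrt 2 : ℂ) * ((‖z‖ : ℝ) : ℂ)) -
        z ^ 2 * (z.re : ℂ) / ((Real.sqrt 2 : ℂ) * ((‖z‖ : ℝ) : ℂ) ^ 3) ∧
    fderiv ℝ petalMap z Complex.I =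
      2 * z * Complex.I / ((Real.sqrt 2 : ℂ) * ((‖z‖ : ℝ) : ℂ)) -
        z ^ 2 * (z.im : ℂ) / ((Real.sqrt 2 : ℂ) * ((‖z‖ : ℝ) : ℂ) ^ 3) := by
  have habsz : (0:ℝ) < ‖z‖ := norm_pos_iff.mpr hz
  have hs : (Real.sqrt 2 : ℂ) ≠ 0 := Complex.ofReal_ne_zero.2 (Real.sqrt_pos.2 two_pos).ne'
  have hr : ((‖z‖ : ℝ) : ℂ) ≠ 0 := Complex.ofReal_ne_zero.2 habsz.ne'
  have hdz : (Real.sqrt 2 : ℂ) * ((‖z‖ : ℝ) : ℂ) ≠ 0 := by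
    exact mul_ne_zero (Complex.ofReal_ne_zero.2 (Real.sqrt_pos.2 two_pos).ne')
      (Complex.ofReal_ne_zero.2 habsz.ne')
  have hc : HasFDerivAt (fun w : ℂ => w ^ 2)
      ((ContinuousLinearMap.smulRight (1 : ℂ →L[ℂ] ℂ) (2 * z ^ 1)).restrictScalars ℝ) z :=
    ((hasDerivAt_pow 2 z).hasFDerivAt).restrictScalars ℝ
  have habs : HasFDerivAt (fun w : ℂ => ((‖w‖ : ℝ) : ℂ))
      (Complex.ofRealCLM.comp ((‖z‖)⁻¹ • (innerSL ℝ z : ℂ →L[ℝ] ℝ))) z :=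
    Complex.ofRealCLM.hasFDerivAt.comp z (abs_hasFDerivAt hz)
  have hd : HasFDerivAt (fun w : ℂ => (Real.sqrt 2 : ℂ) * ((‖w‖ : ℝ) : ℂ))
      ((Real.sqrt 2 : ℂ) • (Complex.ofRealCLM.comp
        ((‖z‖)⁻¹ • (innerSL ℝ z : ℂ →L[ℝ] ℝ)))) z := habs.const_mul _
  have hinv : HasFDerivAt (fun w : ℂ => ((Real.sqrt 2 : ℂ) * ((‖w‖ : ℝ) : ℂ))⁻¹)
      ((-ContinuousLinearMap.mulLeftRight ℝ ℂ
          ((Real.sqrt 2 : ℂ) * ((‖z‖ : ℝ) : ℂ))⁻¹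
          ((Real.sqrt 2 : ℂ) * ((‖z‖ : ℝ) : ℂ))⁻¹).comp
        ((Real.sqrt 2 : ℂ) • (Complex.ofRealCLM.comp
          ((‖z‖)⁻¹ • (innerSL ℝ z : ℂ →L[ℝ] ℝ))))) z :=
    (hasFDerivAt_inv' hdz).comp z hd
  have hmul := (hc.mul hinv).sub_const 1
  have hEq : petalMap =ᶠ[nhds z] fun w : ℂ =>
      w ^ 2 * ((Real.sqrt 2 : ℂ) * ((‖w‖ : ℝ) : ℂ))⁻¹ - 1 := by
    filter_upwards [isOpen_compl_singleton.mem_nhds hz] with w hw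
    have hw' : w ≠ (0:ℂ) := by simpa using hw
    simp [petalMap, if_neg hw', div_eq_mul_inv]
  have H : HasFDerivAt petalMap _ z := hmul.congr_of_eventuallyEq hEq
  refine ⟨H.differentiableAt, ?_, ?_⟩ <;>
  · rw [H.fderiv]
    simp only [ContinuousLinearMap.add_apply, ContinuousLinearMap.smul_apply,
      ContinuousLinearMap.comp_apply, ContinuousLinearMap.neg_apply,
      ContinuousLinearMap.mulLeftRight_apply, ContinuousLinearMap.coe_restrictScalars',
      ContinuousLinearMap.smulRight_apply, ContinuousLinearMap.one_apply,
      innerSL_apply_apply, Complex.inner, Complex.ofRealCLM_apply, smul_eq_mul,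
      Complex.real_smul, Complex.ofReal_mul, Complex.ofReal_one, Complex.ofReal_inv, pow_one,
      Complex.mul_re, Complex.conj_re, Complex.conj_im, Complex.one_re, Complex.one_im,
      Complex.I_re, Complex.I_im, mul_one, mul_zero, sub_zero, zero_sub, mul_neg, neg_neg,
      zero_mul, neg_zero]
    simp only [← div_eq_mul_inv]
    field_simp
    ring

lemma wirtinger_vals {z : ℂ} (hz : z ≠ 0) :
    wirtingerZ petalMap z = 3 * z / (2 * (Real.sqrt 2 : ℂ) * ((‖z‖ : ℝ) : ℂ)) ∧
    wirtingerZbar petalMap z = -(z ^ 3) / (2 * (Real.sqrt 2 : ℂ) * ((‖z‖ : ℝ) : ℂ) ^ 3) := by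
  obtain ⟨-, h1, h2⟩ := petalMap_fderiv hz
  have habsz : (0:ℝ) < ‖z‖ := norm_pos_iff.mpr hz
  have hs : (Real.sqrt 2 : ℂ) ≠ 0 := Complex.ofReal_ne_zero.2 (Real.sqrt_pos.2 two_pos).ne'
  have hr : ((‖z‖ : ℝ) : ℂ) ≠ 0 := Complex.ofReal_ne_zero.2 habsz.ne'
  have hzre : z = (z.re : ℂ) + (z.im : ℂ) * Complex.I := (Complex.re_add_im z).symm
  have habs2 : ((‖z‖ : ℝ) : ℂ) ^ 2 = (z.re : ℂ) ^ 2 + (z.im : ℂ) ^ 2 := by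
    norm_cast
    rw [← Complex.normSq_eq_norm_sq, Complex.normSq_apply]
    ring
  have hD : (Real.sqrt 2 : ℂ) * ((‖z‖ : ℝ) : ℂ) *
      ((Real.sqrt 2 : ℂ) * ((‖z‖ : ℝ) : ℂ) ^ 3) * 2 ≠ 0 :=
    mul_ne_zero (mul_ne_zero (mul_ne_zero hs hr) (mul_ne_zero hs (pow_ne_zero 3 hr))) two_ne_zero
  constructor
  · rw [wirtingerZ, h1, h2]
    field_simp
    linear_combination
      (-2 * ((‖z‖ : ℝ) : ℂ) ^ 2 + (z.im : ℂ) ^ 2) * Complex.I_sq + habs2 -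
        ((z.re : ℂ) - (z.im : ℂ) * Complex.I) * hzre
  · rw [wirtingerZbar, h1, h2]
    field_simp
    linear_combination
      (2 * ((‖z‖ : ℝ) : ℂ) ^ 2) * Complex.I_sq + z * hzre

lemma polar_abs (ρ θ : ℝ) (hρ : 0 < ρ) :
    ‖(ρ : ℂ) * Complex.exp ((θ : ℂ) * Complex.I)‖ = ρ := by
  rw [norm_mul, Complex.norm_exp_ofReal_mul_I, Complex.norm_real, Real.norm_eq_abs, abs_of_pos hρ, mul_one]

lemma polar_ne_zero (ρ θ : ℝ) (hρ : 0 < ρ) :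
    (ρ : ℂ) * Complex.exp ((θ : ℂ) * Complex.I) ≠ 0 :=
  mul_ne_zero (Complex.ofReal_ne_zero.2 hρ.ne') (Complex.exp_ne_zero _)

lemma petalMap_polar (ρ θ : ℝ) (hρ : 0 < ρ) :
    petalMap ((ρ : ℂ) * Complex.exp ((θ : ℂ) * Complex.I)) =
      ((ρ / Real.sqrt 2 : ℝ) : ℂ) * Complex.exp (((2 * θ : ℝ) : ℂ) * Complex.I) - 1 := by
  have hs : (Real.sqrt 2 : ℂ) ≠ 0 := Complex.ofReal_ne_zero.2 (Real.sqrt_pos.2 two_pos).ne'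
  have hρ' : (ρ : ℂ) ≠ 0 := Complex.ofReal_ne_zero.2 hρ.ne'
  rw [petalMap, if_neg (polar_ne_zero ρ θ hρ), polar_abs ρ θ hρ]
  have hexp : Complex.exp (((2 * θ : ℝ) : ℂ) * Complex.I) =
      Complex.exp ((θ : ℂ) * Complex.I) ^ 2 := by
    rw [← Complex.exp_nat_mul]
    push_cast
    ring_nf
  rw [hexp]
  push_cast
  field_simp

lemma petalMap_mapsTo : Set.MapsTo petalMap petalDomain (Metric.ball (0 : ℂ) 1) := by
  rintro w ⟨ρ, θ, hθ1, hθ2, hρ, hlt, rfl⟩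
  rw [petalMap_polar ρ θ hρ]
  rw [Metric.mem_ball, dist_zero_right]
  set a : ℝ := ρ / Real.sqrt 2 with ha
  set ψ : ℝ := 2 * θ with hψ
  have hsq2 : (0:ℝ) < Real.sqrt 2 := Real.sqrt_pos.2 two_pos
  have ha0 : 0 < a := div_pos hρ hsq2
  have hu2 : (‖((a:ℝ):ℂ) * Complex.exp ((ψ:ℂ) * Complex.I) - 1‖) ^ 2 =
      (a * Real.cos ψ - 1) ^ 2 + (a * Real.sin ψ) ^ 2 := by
    rw [Complex.sq_norm, Complex.normSq_apply]
    simp [Complex.sub_re, Complex.sub_im, Complex.mul_re, Complex.mul_im,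
      Complex.exp_ofReal_mul_I_re, Complex.exp_ofReal_mul_I_im]
    ring
  have hcos : a < 2 * Real.cos ψ := by
    have h2 : ρ / Real.sqrt 2 < 2 * Real.cos ψ := by
      rw [div_lt_iff₀ hsq2]
      have hss : Real.sqrt 2 * Real.sqrt 2 = 2 := Real.mul_self_sqrt (by norm_num)
      nlinarith [hlt]
    simpa [ha] using h2
  have key : (a * Real.cos ψ - 1) ^ 2 + (a * Real.sin ψ) ^ 2 < 1 := by
    nlinarith [Real.sin_sq_add_cos_sq ψ, mul_lt_mul_of_pos_left hcos ha0]
  nlinarith [norm_nonneg (((a:ℝ):ℂ) * Complex.exp ((ψ:ℂ) * Complex.I) - 1), hu2, key]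

lemma petalDomain_pos_re {w : ℂ} (hw : w ∈ petalDomain) : 0 < w.re ∧ w ≠ 0 := by
  obtain ⟨ρ, θ, hθ1, hθ2, hρ, hlt, rfl⟩ := hw
  have hπ : (0:ℝ) < π := Real.pi_pos
  have hcos : 0 < Real.cos θ := Real.cos_pos_of_mem_Ioo ⟨by linarith, by linarith⟩
  constructor
  · have : ((ρ:ℂ) * Complex.exp ((θ:ℂ) * Complex.I)).re = ρ * Real.cos θ := by
      simp [Complex.mul_re, Complex.exp_ofReal_mul_I_re, Complex.exp_ofReal_mul_I_im]
    rw [this]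
    positivity
  · exact polar_ne_zero ρ θ hρ

lemma petalMap_injOn : Set.InjOn petalMap petalDomain := by
  intro z₁ h₁ z₂ h₂ heq
  obtain ⟨hre₁, hz₁⟩ := petalDomain_pos_re h₁
  obtain ⟨hre₂, hz₂⟩ := petalDomain_pos_re h₂
  have hs : (Real.sqrt 2 : ℂ) ≠ 0 := Complex.ofReal_ne_zero.2 (Real.sqrt_pos.2 two_pos).ne'
  have hr₁ : ((‖z₁‖ : ℝ) : ℂ) ≠ 0 := Complex.ofReal_ne_zero.2 (norm_pos_iff.mpr hz₁).ne'
  have hr₂ : ((‖z₂‖ : ℝ) : ℂ) ≠ 0 := Complex.ofReal_ne_zero.2 (norm_pos_iff.mpr hz₂).ne'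
  rw [petalMap, petalMap, if_neg hz₁, if_neg hz₂, sub_left_inj] at heq
  -- equal moduli
  have habs : ‖z₁‖ = ‖z₂‖ := by
    have := congrArg norm heq
    rw [norm_div, norm_div, norm_mul, norm_mul, norm_pow, norm_pow] at this
    simp only [Complex.norm_real, Real.norm_eq_abs, norm_norm, abs_norm,
      abs_of_nonneg (Real.sqrt_nonneg 2)] at this
    have h1 := norm_pos_iff.mpr hz₁
    have h2 := norm_pos_iff.mpr hz₂
    have hs0 : (0:ℝ) < Real.sqrt 2 := Real.sqrt_pos.2 two_pos
    field_simp at this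
    nlinarith [this, mul_pos (mul_pos hs0 h1) h2]
  have hsq : z₁ ^ 2 = z₂ ^ 2 := by
    rw [habs] at heq
    field_simp at heq
    exact heq
  have : (z₁ - z₂) * (z₁ + z₂) = 0 := by ring_nf; linear_combination hsq
  rcases mul_eq_zero.1 this with h | h
  · exact sub_eq_zero.1 h
  · exfalso
    have : z₁ = -z₂ := by linear_combination h
    have : z₁.re = -z₂.re := by rw [this]; simp
    linarith

lemma petalMap_surjOn : Set.SurjOn petalMap petalDomain (Metric.ball (0 : ℂ) 1) := by
  intro u hu
  rw [Metric.mem_ball, dist_zero_right] at hu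
  set v : ℂ := u + 1 with hv
  have hv0 : v ≠ 0 := by
    intro h
    have : u = -1 := by rw [hv] at h; linear_combination h
    rw [this] at hu
    simp at hu
  set r : ℝ := ‖v‖ with hr
  have hr0 : 0 < r := norm_pos_iff.mpr hv0
  set ψ : ℝ := Complex.arg v with hψ
  have hπ : (0:ℝ) < π := Real.pi_pos
  -- r² < 2 r cos ψ
  have hre : v.re = r * Real.cos ψ := (Complex.norm_mul_cos_arg v).symm
  have hsq : r ^ 2 < 2 * v.re := by
    have h2 : ‖u‖ ^ 2 < 1 := by nlinarith [norm_nonneg u]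
    have h3 : ‖u‖ ^ 2 = r ^ 2 - 2 * v.re + 1 := by
      rw [Complex.sq_norm, hr, Complex.sq_norm]
      have : u = v - 1 := by rw [hv]; ring
      rw [this, Complex.normSq_apply, Complex.normSq_apply]
      simp [Complex.sub_re, Complex.sub_im]
      ring
    linarith
  have hrcos : r < 2 * Real.cos ψ := by
    rw [hre] at hsq
    nlinarith [hr0]
  have hcosψ : 0 < Real.cos ψ := by nlinarith [hr0]
  have hψlt : -(π / 2) < ψ ∧ ψ < π / 2 := by
    constructor
    · by_contra h
      push_neg at h
      have h1 : Real.cos ψ ≤ 0 := by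
        have := Real.cos_nonpos_of_pi_div_two_le_of_le (x := -ψ) (by linarith)
          (by linarith [Complex.neg_pi_lt_arg v, hψ])
        rwa [Real.cos_neg] at this
      linarith
    · by_contra h
      push_neg at h
      have h1 : Real.cos ψ ≤ 0 :=
        Real.cos_nonpos_of_pi_div_two_le_of_le h (by linarith [Complex.arg_le_pi v, hψ])
      linarith
  refine ⟨(Real.sqrt 2 * r : ℝ) * Complex.exp (((ψ / 2 : ℝ) : ℂ) * Complex.I),
    ⟨Real.sqrt 2 * r, ψ / 2, by linarith [hψlt.1], by linarith [hψlt.2],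
      by positivity, ?_, rfl⟩, ?_⟩
  · have : 2 * (ψ / 2) = ψ := by ring
    rw [this]
    nlinarith [Real.sqrt_pos.2 (show (0:ℝ) < 2 by norm_num), hrcos]
  · have hρ : (0:ℝ) < Real.sqrt 2 * r := by positivity
    rw [petalMap_polar _ _ hρ]
    have h2ψ : 2 * (ψ / 2) = ψ := by ring
    rw [h2ψ]
    have ha : (Real.sqrt 2 * r) / Real.sqrt 2 = r := by
      field_simp
    rw [ha]
    rw [hψ, hr, Complex.norm_mul_exp_arg_mul_I]
    rw [hv]
    ring

/-- The map `φ(z) = z²/(√2·|z|) − 1` takes the interior of the rose petal bijectively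
onto the unit disc, is real-differentiable away from the origin, and satisfies
`φ_z̄ = −(1/3)·(z/z̄)·φ_z` and `J(z,φ) = 1` for all `z ≠ 0`. -/
theorem petalMap_properties :
    Set.BijOn petalMap petalDomain (Metric.ball (0 : ℂ) 1) ∧
    ∀ z : ℂ, z ≠ 0 →
      DifferentiableAt ℝ petalMap z ∧
      wirtingerZbar petalMap z =
        -(1 / 3) * (z / starRingEnd ℂ z) * wirtingerZ petalMap z ∧
      jacobian petalMap z = 1 := by
  refine ⟨⟨petalMap_mapsTo, petalMap_injOn, petalMap_surjOn⟩, fun z hz => ?_⟩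
  obtain ⟨hdiff, -, -⟩ := petalMap_fderiv hz
  obtain ⟨h1, h2⟩ := wirtinger_vals hz
  have habsz : (0:ℝ) < ‖z‖ := norm_pos_iff.mpr hz
  have hs : (Real.sqrt 2 : ℂ) ≠ 0 := Complex.ofReal_ne_zero.2 (Real.sqrt_pos.2 two_pos).ne'
  have hr : ((‖z‖ : ℝ) : ℂ) ≠ 0 := Complex.ofReal_ne_zero.2 habsz.ne'
  refine ⟨hdiff, ?_, ?_⟩
  · have hc : (starRingEnd ℂ) z ≠ 0 := by simpa using hz
    have hzc : z * (starRingEnd ℂ) z = ((‖z‖ : ℝ) : ℂ) ^ 2 := by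
      rw [Complex.mul_conj, Complex.normSq_eq_norm_sq]
      push_cast
      ring
    rw [h1, h2]
    field_simp
    ring_nf
    linear_combination (-1 : ℂ) * hzc
  · have hs2 : Real.sqrt 2 ^ 2 = 2 := Real.sq_sqrt (by norm_num)
    rw [jacobian, h1, h2]
    rw [norm_div, norm_div, norm_mul, norm_mul, norm_mul]
    simp [Complex.norm_real, abs_of_pos habsz, abs_of_nonneg (Real.sqrt_nonneg 2),
      norm_norm]
    field_simp
    linear_combination (-4 : ℝ) * hs2
end
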